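/- Suppose every receiver demand set M_j has size β (with 1 ≤ β ≤ K−1), and each message k ∈ {1,…,K} appears in exactly Gβ/K of the G demand sets. Then for any d ∈ ℝ^K with d ≥ 0 satisfying Σ_{k∈M_j} d_k + d_i ≤ M for all j and all i ∈ M_j^c, we have Σ_{k=1}^K d_k ≤ MK/(β+1). -/
import Mathlib


/-- Symmetric demands: each of the G demand sets has size β and each message
belongs to exactly Gβ/K of them. Then Σ d_k ≤ MK/(β+1). -/
theorem stmt_5 (K G β : ℕ) (hβ1 : 1 ≤ β) (hβK : β ≤ K - 1) (hG : 0 < G)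
    (hK : 0 < K) (M : ℝ) (hM : 0 < M)
    (Msets : Fin G → Finset (Fin K))
    (hcard : ∀ j, (Msets j).card = β)
    (hsym : ∀ k : Fin K,
      (Finset.univ.filter fun j : Fin G => k ∈ Msets j).card * K = G * β)
    (d : Fin K → ℝ) (hd : ∀ k, 0 ≤ d k)
    (hcon : ∀ j, ∀ i ∈ (Msets j)ᶜ, (∑ k ∈ Msets j, d k) + d i ≤ M) :
    ∑ k, d k ≤ M * K / (β + 1) := by
  have hβltK : β < K := lt_of_le_of_lt hβK (Nat.sub_lt hK Nat.one_pos)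
  set c : Fin K → ℕ := fun k => (Finset.univ.filter fun j : Fin G => k ∈ Msets j).card with hc
  set S : ℝ := ∑ k, d k with hS
  have hccard : ∀ j, ((Msets j)ᶜ).card = K - β := by
    intro j
    rw [Finset.card_compl, hcard j]
    simp
  -- swap sums
  have hswap : ∑ j, ∑ k ∈ Msets j, d k = ∑ k, (c k : ℝ) * d k := by
    have : ∀ j, ∑ k ∈ Msets j, d k = ∑ k : Fin K, if k ∈ Msets j then d k else 0 := by
      intro j
      rw [Finset.sum_ite_mem]
      simp
    rw [Finset.sum_congr rfl fun j _ => this j, Finset.sum_comm]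
    refine Finset.sum_congr rfl fun k _ => ?_
    rw [Finset.sum_ite, Finset.sum_const, Finset.sum_const]
    simp [hc, mul_comm]
  -- complement sums
  have hcompl : ∀ j, ∑ i ∈ (Msets j)ᶜ, d i = S - ∑ k ∈ Msets j, d k := by
    intro j
    have := Finset.sum_add_sum_compl (Msets j) d
    rw [hS]; linarith
  -- sum the constraints
  have hmain : ∑ j, ∑ i ∈ (Msets j)ᶜ, ((∑ k ∈ Msets j, d k) + d i)
      ≤ ∑ j : Fin G, ((K : ℝ) - β) * M := by
    refine Finset.sum_le_sum fun j _ => ?_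
    calc ∑ i ∈ (Msets j)ᶜ, ((∑ k ∈ Msets j, d k) + d i)
        ≤ ∑ i ∈ (Msets j)ᶜ, M := Finset.sum_le_sum fun i hi => hcon j i hi
      _ = ((Msets j)ᶜ).card * M := by rw [Finset.sum_const, nsmul_eq_mul]
      _ = ((K : ℝ) - β) * M := by
          rw [hccard j, Nat.cast_sub (le_of_lt hβltK)]
  have hLHS : ∑ j, ∑ i ∈ (Msets j)ᶜ, ((∑ k ∈ Msets j, d k) + d i)
      = ((K : ℝ) - β) * (∑ k, (c k : ℝ) * d k) + (G * S - ∑ k, (c k : ℝ) * d k) := by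
    have : ∀ j, ∑ i ∈ (Msets j)ᶜ, ((∑ k ∈ Msets j, d k) + d i)
        = ((K : ℝ) - β) * (∑ k ∈ Msets j, d k) + (S - ∑ k ∈ Msets j, d k) := by
      intro j
      rw [Finset.sum_add_distrib, Finset.sum_const, nsmul_eq_mul, hccard j,
        Nat.cast_sub (le_of_lt hβltK), hcompl j]
    rw [Finset.sum_congr rfl fun j _ => this j, Finset.sum_add_distrib,
      ← Finset.mul_sum, hswap, Finset.sum_sub_distrib, Finset.sum_const,
      nsmul_eq_mul, hswap]
    simp
  rw [hLHS] at hmain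
  have hRHS : ∑ j : Fin G, ((K : ℝ) - β) * M = G * (((K : ℝ) - β) * M) := by
    rw [Finset.sum_const, nsmul_eq_mul]; simp
  rw [hRHS] at hmain
  -- use symmetry: K * Σ c_k d_k = G β S
  have hcK : ∀ k, (c k : ℝ) * K = G * β := by
    intro k
    exact_mod_cast hsym k
  have hKsum : (K : ℝ) * ∑ k, (c k : ℝ) * d k = G * β * S := by
    rw [Finset.mul_sum, hS, Finset.mul_sum]
    refine Finset.sum_congr rfl fun k _ => ?_
    rw [show (K:ℝ) * ((c k:ℝ) * d k) = ((c k:ℝ) * K) * d k from by ring, hcK k]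
  -- derive the bound
  have hKpos : (0 : ℝ) < K := by exact_mod_cast hK
  have hGpos : (0 : ℝ) < G := by exact_mod_cast hG
  have hβr : (β : ℝ) < K := by exact_mod_cast hβltK
  have hβ1r : (1 : ℝ) ≤ β := by exact_mod_cast hβ1
  rw [le_div_iff₀ (by positivity)]
  -- multiply hmain by K and substitute
  nlinarith [mul_le_mul_of_nonneg_left hmain (le_of_lt hKpos), hKsum,
    mul_pos hGpos (sub_pos.mpr hβr), sq_nonneg ((K:ℝ) - β)]
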